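/- Let W be a real random variable with E W⁴ < ∞ and E W⁴ > 0. Then inf_{b ∈ ℝ} E|W − b| ≥ (E|W − EW|²)^{3/2} / (5·(E W⁴)^{1/2}). -/

import Mathlib

/-!
Fix `b` and put `c = (E W⁴)^{1/4}`. Hölder's inequality
`E(W - b)² ≤ (E|W - b|)^{2/3} (E(W - b)⁴)^{1/3}` together with `Var W ≤ E(W - b)²` gives
`(Var W)³ ≤ (E|W - b|)² E(W - b)⁴`, and `E(W - b)⁴ ≤ 8 E W⁴ + 8 b⁴ ≤ 25 E W⁴` as long as
`|b| ≤ 6c/5`. For larger `|b|`, already the mean is far from `b`: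
`E|W - b| ≥ |b| - |E W| ≥ c/5`, while `Var W ≤ c²`.
-/

open MeasureTheory
open scoped ENNReal RealInnerProductSpace Classical

noncomputable section

/-- The outer product `x xᵀ` of a vector in Euclidean space, as a matrix. -/
def outer {d : ℕ} (x : EuclideanSpace ℝ (Fin d)) : Matrix (Fin d) (Fin d) ℝ :=
  Matrix.of fun i j => x i * x j

/-- The trace inner product `⟨A, B⟩ = Tr (A B)` on symmetric matrices. -/
def minner {d : ℕ} (A B : Matrix (Fin d) (Fin d) ℝ) : ℝ :=
  Matrix.trace (A * B)

/-- The Frobenius norm of a matrix. -/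
def frobNorm {d : ℕ} (M : Matrix (Fin d) (Fin d) ℝ) : ℝ :=
  Real.sqrt (∑ i, ∑ j, (M i j) ^ 2)

/-- Entrywise integral of a matrix-valued function. -/
def mIntegral {d : ℕ} (μ : Measure (EuclideanSpace ℝ (Fin d)))
    (F : EuclideanSpace ℝ (Fin d) → Matrix (Fin d) (Fin d) ℝ) :
    Matrix (Fin d) (Fin d) ℝ :=
  Matrix.of fun i j => ∫ x, F x i j ∂μ

/-- The fourth moment operator `T_μ (A) = ∫ ⟨A, xxᵀ⟩ xxᵀ dμ(x)`. -/
def fourthMomentOp {d : ℕ} (μ : Measure (EuclideanSpace ℝ (Fin d)))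
    (A : Matrix (Fin d) (Fin d) ℝ) : Matrix (Fin d) (Fin d) ℝ :=
  mIntegral μ (fun x => minner A (outer x) • outer x)

/-- The second moment matrix `B = ∫ xxᵀ dμ(x)`. -/
def secondMoment {d : ℕ} (μ : Measure (EuclideanSpace ℝ (Fin d))) :
    Matrix (Fin d) (Fin d) ℝ :=
  mIntegral μ outer

/-- `lam : ℕ → ℝ` lists the eigenvalues (with multiplicity) of the fourth moment operator
`T_μ`, viewed as an operator on the `d(d+1)/2`-dimensional inner product space of symmetric
matrices, in descending order, padded by `0` beyond index `d(d+1)/2`. -/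
def IsEigenSeq {d : ℕ} (μ : Measure (EuclideanSpace ℝ (Fin d))) (lam : ℕ → ℝ) : Prop :=
  Antitone lam ∧ (∀ i, d * (d + 1) / 2 ≤ i → lam i = 0) ∧
  ∃ b : Fin (d * (d + 1) / 2) → Matrix (Fin d) (Fin d) ℝ,
    (∀ i, (b i).IsSymm) ∧
    (∀ i j, minner (b i) (b j) = if i = j then 1 else 0) ∧
    (∀ A : Matrix (Fin d) (Fin d) ℝ, A.IsSymm → A ∈ Submodule.span ℝ (Set.range b)) ∧
    (∀ i : Fin (d * (d + 1) / 2), fourthMomentOp μ (b i) = lam i • b i)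

/-- The second order separation parameter `s(μ)`. -/
def sep {d : ℕ} (μ : Measure (EuclideanSpace ℝ (Fin d))) : ℝ :=
  (1 / 2) * sSup { r : ℝ | ∃ μ₁ μ₂ : Measure (EuclideanSpace ℝ (Fin d)),
    IsProbabilityMeasure μ₁ ∧ IsProbabilityMeasure μ₂ ∧
    μ = (2 : ℝ≥0∞)⁻¹ • μ₁ + (2 : ℝ≥0∞)⁻¹ • μ₂ ∧
    r = frobNorm (secondMoment μ₁ - secondMoment μ₂) }

/-- The standard Gaussian measure `N(0, I)` on `ℝ^d`. -/
def stdGaussian (d : ℕ) : Measure (EuclideanSpace ℝ (Fin d)) :=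
  (Measure.pi fun _ : Fin d => ProbabilityTheory.gaussianReal 0 1).map
    (MeasurableEquiv.toLp 2 (Fin d → ℝ))

/-- The centered Gaussian measure `N(0, B)` on `ℝ^d` with positive semidefinite
covariance matrix `B`, obtained as the pushforward of `N(0, I)` by `B^{1/2}`. -/
def gaussianCov {d : ℕ} (B : Matrix (Fin d) (Fin d) ℝ) :
    Measure (EuclideanSpace ℝ (Fin d)) :=
  if hB : B.PosSemidef then (stdGaussian d).map (fun x => Matrix.toEuclideanLin ((hB.1.eigenvectorUnitary : Matrix (Fin d) (Fin d) ℝ) * Matrix.diagonal (fun i => Real.sqrt (hB.1.eigenvalues i)) * (star hB.1.eigenvectorUnitary : Matrix (Fin d) (Fin d) ℝ)) x)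
  else 0

/-- The positive semidefinite square root `B^{1/2}` of a positive semidefinite matrix. -/
def psdSqrt {d : ℕ} (B : Matrix (Fin d) (Fin d) ℝ) : Matrix (Fin d) (Fin d) ℝ :=
  if hB : B.PosSemidef then (hB.1.eigenvectorUnitary : Matrix (Fin d) (Fin d) ℝ) * Matrix.diagonal (fun i => Real.sqrt (hB.1.eigenvalues i)) * (star hB.1.eigenvectorUnitary : Matrix (Fin d) (Fin d) ℝ) else 0


open ProbabilityTheory

section Moments

variable {Ω : Type*} [MeasurableSpace Ω] {μ : Measure Ω} {X : Ω → ℝ}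

lemma MeasureTheory.MemLp.integrable_pow_of_le [IsFiniteMeasure μ] {p : ℝ≥0∞} {k : ℕ}
    (hX : MemLp X p μ) (hk : (k : ℝ≥0∞) ≤ p) : Integrable (fun ω => X ω ^ k) μ := by
  refine (hX.mono_exponent hk).integrable_norm_pow'.mono' (hX.aestronglyMeasurable.pow k)
    (ae_of_all _ fun ω => ?_)
  simp [Real.norm_eq_abs]

/-- Hölder's inequality, obtained without fractional exponents by integrating the pointwise
inequality `|x| (f |x| - s)² (f |x| + 2 s) ≥ 0` at `s = E X²`, `f = E|X|`. -/
lemma integral_sq_pow_three_le [IsFiniteMeasure μ] (hX : MemLp X 4 μ) :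
    (∫ ω, X ω ^ 2 ∂μ) ^ 3 ≤ (∫ ω, |X ω| ∂μ) ^ 2 * ∫ ω, X ω ^ 4 ∂μ := by
  set s := ∫ ω, X ω ^ 2 ∂μ
  set f := ∫ ω, |X ω| ∂μ
  set M := ∫ ω, X ω ^ 4 ∂μ
  have hX1 : Integrable (fun ω => |X ω|) μ := (hX.integrable (by norm_num)).abs
  have hX2 : Integrable (fun ω => X ω ^ 2) μ := hX.integrable_pow_of_le (by norm_num)
  have hX4 : Integrable (fun ω => X ω ^ 4) μ := hX.integrable_pow_of_le (by norm_num)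
  have hM : 0 ≤ M := integral_nonneg fun ω => by positivity
  rcases (integral_nonneg fun ω => abs_nonneg (X ω) : 0 ≤ f).eq_or_lt with hf | hf
  · have hX0 : X =ᵐ[μ] 0 := by
      filter_upwards [(integral_eq_zero_iff_of_nonneg (fun ω => abs_nonneg _) hX1).1 hf.symm]
        with ω hω
      simpa using hω
    have hs0 : s = 0 := integral_eq_zero_of_ae (by filter_upwards [hX0] with ω hω; simp [hω])
    rw [hs0, zero_pow three_ne_zero]
    exact mul_nonneg (sq_nonneg f) hM
  have tangent : ∀ ω, 3 * s ^ 2 * f * X ω ^ 2 ≤ 2 * s ^ 3 * |X ω| + f ^ 3 * X ω ^ 4 := by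
    intro ω
    have h : 0 ≤ |X ω| * (f * |X ω| - s) ^ 2 * (f * |X ω| + 2 * s) := by positivity
    rw [← sq_abs (X ω), ← Even.pow_abs (show Even 4 by norm_num) (X ω)]
    nlinarith [h]
  have key : 3 * s ^ 2 * f * s ≤ 2 * s ^ 3 * f + f ^ 3 * M :=
    calc 3 * s ^ 2 * f * s = ∫ ω, 3 * s ^ 2 * f * X ω ^ 2 ∂μ := (integral_const_mul _ _).symm
      _ ≤ ∫ ω, (2 * s ^ 3 * |X ω| + f ^ 3 * X ω ^ 4) ∂μ :=
        integral_mono (hX2.const_mul _) ((hX1.const_mul _).add (hX4.const_mul _)) tangent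
      _ = 2 * s ^ 3 * f + f ^ 3 * M := by
        rw [integral_add (hX1.const_mul _) (hX4.const_mul _), integral_const_mul,
          integral_const_mul]
  nlinarith [mul_pos hf hf]

variable [IsProbabilityMeasure μ]

lemma sq_integral_le_integral_sq (hX : MemLp X 2 μ) :
    (∫ ω, X ω ∂μ) ^ 2 ≤ ∫ ω, X ω ^ 2 ∂μ := by
  simpa [variance_eq_sub hX] using variance_nonneg X μ

lemma sq_integral_sq_le_integral_pow_four (hX : MemLp X 4 μ) :
    (∫ ω, X ω ^ 2 ∂μ) ^ 2 ≤ ∫ ω, X ω ^ 4 ∂μ := by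
  have hX2 : MemLp (fun ω => X ω ^ 2) 2 μ :=
    (memLp_two_iff_integrable_sq (hX.aestronglyMeasurable.pow 2)).2
      (by simpa only [Pi.pow_apply, ← pow_mul] using hX.integrable_pow_of_le (k := 4) (by norm_num))
  simpa only [← pow_mul] using sq_integral_le_integral_sq hX2

lemma pow_four_integral_le_integral_pow_four (hX : MemLp X 4 μ) :
    (∫ ω, X ω ∂μ) ^ 4 ≤ ∫ ω, X ω ^ 4 ∂μ :=
  calc (∫ ω, X ω ∂μ) ^ 4 = ((∫ ω, X ω ∂μ) ^ 2) ^ 2 := by ring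
    _ ≤ (∫ ω, X ω ^ 2 ∂μ) ^ 2 :=
      pow_le_pow_left₀ (sq_nonneg _) (sq_integral_le_integral_sq (hX.mono_exponent (by norm_num))) 2
    _ ≤ ∫ ω, X ω ^ 4 ∂μ := sq_integral_sq_le_integral_pow_four hX

lemma sq_variance_le_integral_pow_four (hX : MemLp X 4 μ) :
    Var[X; μ] ^ 2 ≤ ∫ ω, X ω ^ 4 ∂μ := by
  have hvar : Var[X; μ] ≤ ∫ ω, X ω ^ 2 ∂μ := by
    simpa using variance_le_expectation_sq (μ := μ) hX.aestronglyMeasurable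
  exact (pow_le_pow_left₀ (variance_nonneg X μ) hvar 2).trans
    (sq_integral_sq_le_integral_pow_four hX)

lemma variance_le_integral_sub_sq (hX : AEStronglyMeasurable X μ) (b : ℝ) :
    Var[X; μ] ≤ ∫ ω, (X ω - b) ^ 2 ∂μ := by
  rw [← variance_sub_const hX b]
  exact variance_le_expectation_sq (hX.sub aestronglyMeasurable_const)

lemma abs_integral_sub_le_integral_abs_sub (hX : Integrable X μ) (b : ℝ) :
    |∫ ω, X ω ∂μ - b| ≤ ∫ ω, |X ω - b| ∂μ := by
  simpa [integral_sub hX (integrable_const b)] using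
    abs_integral_le_integral_abs (μ := μ) (f := fun ω => X ω - b)

lemma integral_sub_pow_four_le (hX : MemLp X 4 μ) (b : ℝ) :
    ∫ ω, (X ω - b) ^ 4 ∂μ ≤ 8 * ∫ ω, X ω ^ 4 ∂μ + 8 * b ^ 4 := by
  have hX4 : Integrable (fun ω => X ω ^ 4) μ := hX.integrable_pow_of_le (by norm_num)
  calc ∫ ω, (X ω - b) ^ 4 ∂μ ≤ ∫ ω, (8 * X ω ^ 4 + 8 * b ^ 4) ∂μ := by
        refine integral_mono ((hX.sub (memLp_const b)).integrable_pow_of_le (by norm_num))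
          ((hX4.const_mul 8).add (integrable_const _)) fun ω => ?_
        nlinarith [sq_nonneg (X ω + b), sq_nonneg (X ω ^ 2 - b ^ 2), sq_nonneg (X ω * b)]
    _ = 8 * ∫ ω, X ω ^ 4 ∂μ + 8 * b ^ 4 := by
        rw [integral_add (hX4.const_mul 8) (integrable_const _), integral_const_mul]
        simp

lemma variance_pow_three_le (hX : MemLp X 4 μ) (b : ℝ) :
    Var[X; μ] ^ 3 ≤ 25 * (∫ ω, X ω ^ 4 ∂μ) * (∫ ω, |X ω - b| ∂μ) ^ 2 := by
  set m := ∫ ω, X ω ^ 4 ∂μ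
  set f := ∫ ω, |X ω - b| ∂μ
  obtain ⟨c, hc, hcm⟩ : ∃ c : ℝ, 0 ≤ c ∧ c ^ 4 = m := by
    have hm : 0 ≤ m := integral_nonneg fun ω => by positivity
    refine ⟨m ^ (1 / 4 : ℝ), by positivity, ?_⟩
    rw [← Real.rpow_natCast, ← Real.rpow_mul hm]
    norm_num
  have hv : 0 ≤ Var[X; μ] := variance_nonneg X μ
  have hf : 0 ≤ f := integral_nonneg fun ω => abs_nonneg _
  rcases le_or_gt |b| (6 / 5 * c) with hb | hb
  · have hb4 : 8 * b ^ 4 ≤ 17 * m := by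
      have := pow_le_pow_left₀ (abs_nonneg b) hb 4
      rw [Even.pow_abs (by norm_num)] at this
      rw [← hcm]
      linarith [show (6 / 5 * c) ^ 4 = 1296 / 625 * c ^ 4 by ring, pow_nonneg hc 4]
    calc Var[X; μ] ^ 3 ≤ (∫ ω, (X ω - b) ^ 2 ∂μ) ^ 3 :=
          pow_le_pow_left₀ hv (variance_le_integral_sub_sq hX.aestronglyMeasurable b) 3
      _ ≤ f ^ 2 * ∫ ω, (X ω - b) ^ 4 ∂μ := integral_sq_pow_three_le (hX.sub (memLp_const b))
      _ ≤ f ^ 2 * (8 * m + 8 * b ^ 4) :=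
          mul_le_mul_of_nonneg_left (integral_sub_pow_four_le hX b) (sq_nonneg f)
      _ ≤ 25 * m * f ^ 2 := by nlinarith [mul_le_mul_of_nonneg_left hb4 (sq_nonneg f)]
  · have hmean : |∫ ω, X ω ∂μ| ≤ c := by
      refine (pow_le_pow_iff_left₀ (abs_nonneg _) hc four_ne_zero).1 ?_
      rw [Even.pow_abs (by norm_num), hcm]
      exact pow_four_integral_le_integral_pow_four hX
    have hvar : Var[X; μ] ≤ c ^ 2 := by
      refine (pow_le_pow_iff_left₀ hv (sq_nonneg c) two_ne_zero).1 ?_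
      rw [← pow_mul, hcm]
      exact sq_variance_le_integral_pow_four hX
    have hfar : c ≤ 5 * f := by
      have := abs_integral_sub_le_integral_abs_sub (hX.integrable (by norm_num)) b
      have := abs_sub_abs_le_abs_sub b (∫ ω, X ω ∂μ)
      rw [abs_sub_comm] at this
      linarith
    calc Var[X; μ] ^ 3 ≤ (c ^ 2) ^ 3 := pow_le_pow_left₀ hv hvar 3
      _ = c ^ 4 * c ^ 2 := by ring
      _ ≤ c ^ 4 * (5 * f) ^ 2 := by gcongr
      _ = 25 * m * f ^ 2 := by rw [hcm]; ring

end Moments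

lemma rpow_three_halves_div_le {v m f : ℝ} (hv : 0 ≤ v) (hm : 0 ≤ m) (hf : 0 ≤ f)
    (h : v ^ 3 ≤ 25 * m * f ^ 2) : v ^ ((3 : ℝ) / 2) / (5 * m ^ ((1 : ℝ) / 2)) ≤ f := by
  refine div_le_of_le_mul₀ (by positivity) hf ?_
  calc v ^ ((3 : ℝ) / 2) = √(v ^ 3) := by
        rw [Real.sqrt_eq_rpow, ← Real.rpow_natCast, ← Real.rpow_mul hv]
        norm_num
    _ ≤ √((5 * f) ^ 2 * m) := Real.sqrt_le_sqrt (by linarith)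
    _ = f * (5 * m ^ ((1 : ℝ) / 2)) := by
        rw [Real.sqrt_mul (sq_nonneg _), Real.sqrt_sq (by positivity), Real.sqrt_eq_rpow]
        ring

theorem median_absolute_deviation_lower_bound_general
    (ν : Measure ℝ) [IsProbabilityMeasure ν]
    (h4 : Integrable (fun x : ℝ => x ^ 4) ν) :
    (∫ x, (x - ∫ y, y ∂ν) ^ 2 ∂ν) ^ ((3 : ℝ) / 2) /
        (5 * (∫ x, x ^ 4 ∂ν) ^ ((1 : ℝ) / 2)) ≤
      ⨅ b : ℝ, ∫ x, |x - b| ∂ν := by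
  have hW : MemLp (fun x : ℝ => x) 4 ν :=
    (integrable_norm_rpow_iff aestronglyMeasurable_id (by norm_num) (by norm_num)).1
      (by simpa [Real.norm_eq_abs, Even.pow_abs (show Even 4 by norm_num)] using h4)
  rw [← variance_eq_integral (X := fun x : ℝ => x) aemeasurable_id']
  exact le_ciInf fun b => rpow_three_halves_div_le (variance_nonneg _ _)
    (integral_nonneg fun x => by positivity) (integral_nonneg fun x => abs_nonneg _)
    (variance_pow_three_le hW b)

/-- `inf_b E|W - b| ≥ (E|W - EW|²)^{3/2} / (5 (E W⁴)^{1/2})`, formulated for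
the distribution `ν` of the real random variable `W`. -/
theorem median_absolute_deviation_lower_bound
    (ν : Measure ℝ) [IsProbabilityMeasure ν]
    (h4 : Integrable (fun x : ℝ => x ^ 4) ν) (hpos : 0 < ∫ x, x ^ 4 ∂ν) :
    (∫ x, (x - ∫ y, y ∂ν) ^ 2 ∂ν) ^ ((3 : ℝ) / 2) /
        (5 * (∫ x, x ^ 4 ∂ν) ^ ((1 : ℝ) / 2)) ≤
      ⨅ b : ℝ, ∫ x, |x - b| ∂ν :=
  median_absolute_deviation_lower_bound_general ν h4

end
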